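/- Normalization of inner layers at the optimum: consider the estimator Θ̂ minimizing Θ ↦ ∑_{i=1}^n ‖y_i − g_Θ(x_i)‖₂² + r·‖Θ^L‖₁ over the set 𝓜₁ = {Θ : max_{j<L} ‖Θ^j‖₁ ≤ 1}, where the activations are nonnegative homogeneous and r > 0. If the all-zeros parameter is not a solution, then every solution Θ̂ satisfies ‖Θ̂^j‖₁ = 1 for all j ∈ {0,…,L−1}. -/
import Mathlib


/-- Inner part of the network: `netH j x = f^j[Θ^{j-1} ⋯ f¹[Θ⁰ x]]`. -/
def netH (p : ℕ → ℕ)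
    (Θ : ∀ k, Matrix (Fin (p (k + 1))) (Fin (p k)) ℝ)
    (f : ∀ k, (Fin (p k) → ℝ) → (Fin (p k) → ℝ)) :
    (j : ℕ) → (Fin (p 0) → ℝ) → (Fin (p j) → ℝ)
  | 0 => fun x => x
  | j + 1 => fun x => f (j + 1) ((Θ j).mulVec (netH p Θ f j x))

/-- Entrywise ℓ1-norm of a matrix. -/
def norm1 {a b : ℕ} (M : Matrix (Fin a) (Fin b) ℝ) : ℝ :=
  ∑ i, ∑ k, |M i k|

/-- The regularized least-squares objective `∑ᵢ ‖yᵢ − Θ^L f^L[⋯]xᵢ‖₂² + r ‖Θ^L‖₁`. -/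
def objCon (L m n : ℕ) (p : ℕ → ℕ)
    (f : ∀ k, (Fin (p k) → ℝ) → (Fin (p k) → ℝ))
    (x : Fin n → Fin (p 0) → ℝ) (y : Fin n → Fin m → ℝ) (r : ℝ)
    (AL : Matrix (Fin m) (Fin (p L)) ℝ)
    (A : ∀ k, Matrix (Fin (p (k + 1))) (Fin (p k)) ℝ) : ℝ :=
  (∑ i, ∑ j, (y i j - AL.mulVec (netH p A f L (x i)) j) ^ 2) + r * norm1 AL

lemma norm1_nonneg {a b : ℕ} (M : Matrix (Fin a) (Fin b) ℝ) : 0 ≤ norm1 M := by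
  apply Finset.sum_nonneg; intro i _; apply Finset.sum_nonneg; intro k _; exact abs_nonneg _

lemma norm1_smul {a b : ℕ} (c : ℝ) (M : Matrix (Fin a) (Fin b) ℝ) :
    norm1 (c • M) = |c| * norm1 M := by
  simp [norm1, Matrix.smul_apply, abs_mul, Finset.mul_sum]

lemma norm1_eq_zero {a b : ℕ} {M : Matrix (Fin a) (Fin b) ℝ} (h : norm1 M = 0) : M = 0 := by
  ext i k
  have h1 := (Finset.sum_eq_zero_iff_of_nonneg
    (fun i _ => Finset.sum_nonneg fun k _ => abs_nonneg (M i k))).mp h i (Finset.mem_univ i)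
  have h2 := (Finset.sum_eq_zero_iff_of_nonneg
    (fun k _ => abs_nonneg (M i k))).mp h1 k (Finset.mem_univ k)
  simpa using h2

lemma netH_update (p : ℕ → ℕ)
    (A : ∀ k, Matrix (Fin (p (k + 1))) (Fin (p k)) ℝ)
    (f : ∀ k, (Fin (p k) → ℝ) → (Fin (p k) → ℝ))
    (hhom : ∀ k (a : ℝ), 0 ≤ a → ∀ b, f k (a • b) = a • f k b)
    (j0 : ℕ) (s : ℝ) (hs : 0 ≤ s) (x : Fin (p 0) → ℝ) :
    ∀ j, (j ≤ j0 → netH p (Function.update A j0 (s • A j0)) f j x = netH p A f j x) ∧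
      (j0 < j → netH p (Function.update A j0 (s • A j0)) f j x = s • netH p A f j x) := by
  intro j
  induction j with
  | zero => exact ⟨fun _ => rfl, fun h => absurd h (Nat.not_lt_zero _)⟩
  | succ j ih =>
    constructor
    · intro hj
      show f (j+1) ((Function.update A j0 (s • A j0) j).mulVec _) = _
      rw [Function.update_of_ne (by omega), ih.1 (by omega)]
      rfl
    · intro hj
      by_cases hje : j = j0
      · subst hje
        show f (j+1) ((Function.update A j (s • A j) j).mulVec _) = _
        rw [Function.update_self, ih.1 le_rfl, Matrix.smul_mulVec, hhom _ s hs]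
        rfl
      · show f (j+1) ((Function.update A j0 (s • A j0) j).mulVec _) = _
        rw [Function.update_of_ne hje, ih.2 (by omega), Matrix.mulVec_smul, hhom _ s hs]
        rfl

/-- Membership in the connection-sparse parameter set `𝓜₁`:
all inner layers have entrywise ℓ1-norm at most 1. -/
def memM1 (L : ℕ) (p : ℕ → ℕ)
    (A : ∀ k, Matrix (Fin (p (k + 1))) (Fin (p k)) ℝ) : Prop :=
  ∀ j < L, norm1 (A j) ≤ 1

/-- normalization of inner layers at the optimum: for
nonnegative-homogeneous activations and `r > 0`, if the all-zeros parameter is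
not a solution, then every solution `Θ̂ ∈ 𝓜₁` has `‖Θ̂^j‖₁ = 1` for all inner
layers `j < L`. -/
theorem inner_layers_normalized (L m n : ℕ) (hL : 1 ≤ L) (p : ℕ → ℕ)
    (f : ∀ k, (Fin (p k) → ℝ) → (Fin (p k) → ℝ))
    (hhom : ∀ k (a : ℝ), 0 ≤ a → ∀ b, f k (a • b) = a • f k b)
    (x : Fin n → Fin (p 0) → ℝ) (y : Fin n → Fin m → ℝ)
    (r : ℝ) (hr : 0 < r)
    (AL : Matrix (Fin m) (Fin (p L)) ℝ)
    (A : ∀ k, Matrix (Fin (p (k + 1))) (Fin (p k)) ℝ)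
    (hmem : memM1 L p A)
    (hmin : ∀ (BL : Matrix (Fin m) (Fin (p L)) ℝ)
      (B : ∀ k, Matrix (Fin (p (k + 1))) (Fin (p k)) ℝ), memM1 L p B →
        objCon L m n p f x y r AL A ≤ objCon L m n p f x y r BL B)
    (hzero : ∃ (BL : Matrix (Fin m) (Fin (p L)) ℝ)
      (B : ∀ k, Matrix (Fin (p (k + 1))) (Fin (p k)) ℝ), memM1 L p B ∧
        objCon L m n p f x y r BL B < objCon L m n p f x y r 0 (fun _ => 0)) :
    ∀ j < L, norm1 (A j) = 1 := by
  intro j0 hj0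
  by_contra hne
  have hc : norm1 (A j0) < 1 := lt_of_le_of_ne (hmem j0 hj0) hne
  set c := norm1 (A j0) with hc_def
  have hc0 : 0 ≤ c := norm1_nonneg _
  have h1c : (0 : ℝ) < 1 + c := by linarith
  set s : ℝ := 2 / (1 + c) with hs_def
  have hs1 : 1 < s := by rw [hs_def, lt_div_iff₀ h1c]; linarith
  have hs0 : 0 < s := by linarith
  -- `AL ≠ 0`, since otherwise the objective would equal the value at zero,
  -- contradicting that zero is not a solution.
  have hAL : 0 < norm1 AL := by
    rcases hzero with ⟨BL, B, hB, hlt⟩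
    rcases (norm1_nonneg AL).lt_or_eq with h | h
    · exact h
    exfalso
    have hAL0 : AL = 0 := norm1_eq_zero h.symm
    have h1 : objCon L m n p f x y r AL A = objCon L m n p f x y r 0 (fun _ => 0) := by
      subst hAL0
      simp [objCon, norm1, Matrix.zero_mulVec]
    have h2 := hmin BL B hB
    rw [h1] at h2
    linarith
  -- rescaled parameters
  set B := Function.update A j0 (s • A j0) with hB_def
  have hBmem : memM1 L p B := by
    intro j hj
    by_cases hje : j = j0
    · subst hje
      rw [hB_def, Function.update_self, norm1_smul, abs_of_pos hs0, ← hc_def,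
        hs_def, div_mul_eq_mul_div, div_le_one h1c]
      linarith
    · rw [hB_def, Function.update_of_ne hje]
      exact hmem j hj
  have hnet : ∀ i, netH p B f L (x i) = s • netH p A f L (x i) := fun i =>
    (netH_update p A f hhom j0 s hs0.le (x i) L).2 hj0
  have hkey : objCon L m n p f x y r (s⁻¹ • AL) B < objCon L m n p f x y r AL A := by
    unfold objCon
    have hq : ∀ i, (s⁻¹ • AL).mulVec (netH p B f L (x i))
        = AL.mulVec (netH p A f L (x i)) := by
      intro i
      rw [hnet i, Matrix.smul_mulVec, Matrix.mulVec_smul, smul_smul,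
        inv_mul_cancel₀ hs0.ne', one_smul]
    simp only [hq]
    have hpen : r * norm1 (s⁻¹ • AL) < r * norm1 AL := by
      rw [norm1_smul, abs_of_pos (inv_pos.mpr hs0)]
      have h3 : s⁻¹ * norm1 AL < 1 * norm1 AL :=
        mul_lt_mul_of_pos_right (by rw [inv_lt_one_iff₀]; right; exact hs1) hAL
      rw [one_mul] at h3
      exact mul_lt_mul_of_pos_left h3 hr
    linarith
  exact absurd (hmin (s⁻¹ • AL) B hBmem) (not_le.mpr hkey)
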